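/- Let R = ℚ[x_1, x_2, …] be the polynomial ring over ℚ in countably many variables indexed by the positive integers, graded by a weight function w assigning to each variable x_k a degree w(k) ∈ ℕ. Let B be a commutative ℚ-algebra, and let q : ℕ₊ × ℕ₊ → ℚ be a family of positive rationals with q(n,1) = 1 for all n ≥ 1. For each n ≥ 1 let δ_{q,n} denote the unique ℚ-linear derivation of R with δ_{q,n}(x_k) = q(n,k) for all k ≥ 1, and for a finitely supported function ν : ℕ₊ → ℕ set δ_q^ν = ∘_{i≥1} δ_{q,i}^{ν_i} (these derivations commute, so the order is irrelevant). Suppose given maps C_n : R → B for n ≥ 0 such that: (1) C_0 is a ℚ-algebra homomorphism; (2) for all f, g ∈ R and all n ≥ 0, C_n(f·g) = Σ_{i+j=n} C_i(f)·C_j(g); (3) for every n ≥ 0, every d, and all f, g ∈ R that are w-homogeneous of degree d and every c ∈ ℚ, C_n(f+g) = C_n(f) + C_n(g) and C_n(c·f) = c·C_n(f); (4) C_n(x_k) = q(n,k)·C_n(x_1) for all n ≥ 1 and k ≥ 1. Then for every w-homogeneous polynomial f ∈ R and every n ≥ 0, C_n(f) = Σ_{ν ⊢ n} C_0(δ_q^ν(f))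 · ∏_{i≥1} C_i(x_1)^{ν_i}/(ν_i)!, where the sum runs over all finitely supported ν : ℕ₊ → ℕ with Σ_{i≥1} i·ν_i = n. -/

import Mathlib

/-!
Both sides are additive, hence `ℚ`-linear, on each homogeneous component, so it suffices to treat
monomials, by induction on the monomial. Multiplicativity gives the recursion
`C_n(x_k g) = C_0(x_k) C_n(g) + Σ_{j=1}^n q(j,k) C_j(x_1) C_{n-j}(g)`. The right-hand side obeys
the same recursion: by the Leibniz rule
`δ_q^ν(x_k g) = x_k δ_q^ν(g) + Σ_{j ∈ ν} q(j,k) δ_q^{ν-j}(g)`, and removing one part `j` is a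
bijection from the partitions of `n` containing `j` onto the partitions of `n - j`, under which
`ν_j · Π_i C_i(x_1)^{ν_i}/ν_i!` becomes `C_j(x_1)` times the weight of `ν - j`. On constants
both sides reduce to `C_n(1)`, which vanishes for `n ≥ 1` because
`Σ_n C_n(1) tⁿ` is an idempotent unit of `B⟦t⟧`.
-/

open MvPolynomial

noncomputable def deltaQ (q : ℕ → ℕ+ → ℚ) (n : ℕ) :
    Derivation ℚ (MvPolynomial ℕ+ ℚ) (MvPolynomial ℕ+ ℚ) :=
  mkDerivation ℚ fun k : ℕ+ => C (q n k)

noncomputable def deltaQPow (q : ℕ → ℕ+ → ℚ) {n : ℕ} (ν : n.Partition) :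
    MvPolynomial ℕ+ ℚ →ₗ[ℚ] MvPolynomial ℕ+ ℚ :=
  ((ν.parts.sort (· ≤ ·)).map fun i => (deltaQ q i).toLinearMap).prod

open Finset

namespace deltaQ

variable (q : ℕ → ℕ+ → ℚ)

theorem apply_X (i : ℕ) (k : ℕ+) : deltaQ q i (X k) = C (q i k) :=
  mkDerivation_X ℚ _ k

theorem commute (i j : ℕ) : Commute (deltaQ q i).toLinearMap (deltaQ q j).toLinearMap := by
  have h : ⁅deltaQ q i, deltaQ q j⁆ = 0 :=
    derivation_ext fun k => by simp [Derivation.commutator_apply, apply_X, derivation_C]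
  rw [commute_iff_lie_eq, ← Derivation.commutator_coe_linear_map, h]
  rfl

end deltaQ

/-- `deltaQPow` indexed by a multiset rather than a sorted list, so that adding a part is a
single rewrite (`deltaQMultiset.cons_apply`). -/
noncomputable def deltaQMultiset (q : ℕ → ℕ+ → ℚ) (s : Multiset ℕ) :
    Module.End ℚ (MvPolynomial ℕ+ ℚ) :=
  (s.map fun i => (deltaQ q i).toLinearMap).noncommProd <| by
    rintro _ hx _ hy -
    obtain ⟨i, -, rfl⟩ := Multiset.mem_map.mp hx
    obtain ⟨j, -, rfl⟩ := Multiset.mem_map.mp hy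
    exact deltaQ.commute q i j

namespace deltaQMultiset

variable (q : ℕ → ℕ+ → ℚ)

@[simp]
theorem zero : deltaQMultiset q 0 = 1 := by
  simp [deltaQMultiset]

theorem cons_apply (i : ℕ) (s : Multiset ℕ) (f : MvPolynomial ℕ+ ℚ) :
    deltaQMultiset q (i ::ₘ s) f = deltaQ q i (deltaQMultiset q s f) := by
  simp only [deltaQMultiset, Multiset.map_cons, Multiset.noncommProd_cons]
  rfl

theorem _root_.deltaQPow_eq_deltaQMultiset {n : ℕ} (ν : n.Partition) :
    deltaQPow q ν = deltaQMultiset q ν.parts := by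
  conv_rhs => rw [← Multiset.sort_eq ν.parts (· ≤ ·)]
  simp only [deltaQMultiset, Multiset.map_coe, Multiset.noncommProd_coe]
  rfl

theorem apply_one {s : Multiset ℕ} (hs : s ≠ 0) : deltaQMultiset q s 1 = 0 := by
  induction s using Multiset.induction_on with
  | empty => exact absurd rfl hs
  | cons i s ih =>
    rcases eq_or_ne s 0 with rfl | hs'
    · rw [cons_apply, zero, Module.End.one_apply, Derivation.map_one_eq_zero]
    · rw [cons_apply, ih hs', map_zero]

theorem apply_X_mul (k : ℕ+) (g : MvPolynomial ℕ+ ℚ) (s : Multiset ℕ) :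
    deltaQMultiset q s (X k * g) = X k * deltaQMultiset q s g +
      (s.map fun j => q j k • deltaQMultiset q (s.erase j) g).sum := by
  induction s using Multiset.induction_on with
  | empty => simp
  | cons i s ih =>
    have herase : ∀ j ∈ s, q j k • deltaQ q i (deltaQMultiset q (s.erase j) g) =
        q j k • deltaQMultiset q ((i ::ₘ s).erase j) g := fun j hj => by
      rw [Multiset.erase_cons_tail_of_mem hj, cons_apply]
    rw [cons_apply, ih, map_add, Derivation.leibniz, deltaQ.apply_X, map_multiset_sum,
      Multiset.map_map, Multiset.map_cons, Multiset.sum_cons, Multiset.erase_cons_head,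
      ← cons_apply]
    simp only [Function.comp_def, Derivation.map_smul]
    rw [Multiset.map_congr rfl herase, smul_eq_mul, smul_eq_mul, mul_comm _ (C _), C_mul',
      add_assoc]

end deltaQMultiset

section HomogeneousComponent

variable {σ M N : Type*} [AddCommMonoid M] [AddCommGroup N]

noncomputable def weightedHomogeneousAddHom (w : σ → M) (d : M) (F : MvPolynomial σ ℚ → N)
    (hF : ∀ f g : MvPolynomial σ ℚ, f.IsWeightedHomogeneous w d → g.IsWeightedHomogeneous w d →
      F (f + g) = F f + F g) :
    weightedHomogeneousSubmodule ℚ w d →+ N :=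
  AddMonoidHom.mk' (fun f => F f) fun f g => hF f g f.2 g.2

variable {w : σ → M} {d : M} {F : MvPolynomial σ ℚ → N}

theorem map_smul_of_isWeightedHomogeneous [Module ℚ N]
    (hF : ∀ f g : MvPolynomial σ ℚ, f.IsWeightedHomogeneous w d → g.IsWeightedHomogeneous w d →
      F (f + g) = F f + F g) (c : ℚ) {f : MvPolynomial σ ℚ}
    (hf : f.IsWeightedHomogeneous w d) : F (c • f) = c • F f :=
  map_rat_smul (weightedHomogeneousAddHom w d F hF) c ⟨f, hf⟩

theorem eq_sum_monomial_of_isWeightedHomogeneous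
    (hF : ∀ f g : MvPolynomial σ ℚ, f.IsWeightedHomogeneous w d → g.IsWeightedHomogeneous w d →
      F (f + g) = F f + F g) {f : MvPolynomial σ ℚ}
    (hf : f.IsWeightedHomogeneous w d) :
    F f = ∑ s ∈ f.support, F (monomial s (coeff s f)) := by
  have hmem (s : σ →₀ ℕ) (hs : s ∈ f.support) :
      monomial s (coeff s f) ∈ weightedHomogeneousSubmodule ℚ w d :=
    (mem_weightedHomogeneousSubmodule ℚ w d _).mpr
      (isWeightedHomogeneous_monomial w s _ (hf (mem_support_iff.mp hs)))
  let g : f.support → weightedHomogeneousSubmodule ℚ w d :=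
    fun s => ⟨monomial s.1 (coeff s.1 f), hmem s.1 s.2⟩
  have hsum : ∑ s ∈ f.support.attach, g s =
      ⟨f, (mem_weightedHomogeneousSubmodule ℚ w d f).mpr hf⟩ := by
    ext1
    rw [Submodule.coe_sum, sum_attach f.support (fun s => monomial s (coeff s f)),
      support_sum_monomial_coeff]
  have hmap := congr(weightedHomogeneousAddHom w d F hF $hsum)
  rw [map_sum] at hmap
  exact hmap.symm.trans (sum_attach f.support (fun s => F (monomial s (coeff s f))))

end HomogeneousComponent

theorem sum_antidiagonal_eq_add_sum_Ioc {M : Type*} [AddCommMonoid M] (f : ℕ → ℕ → M) (n : ℕ) :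
    ∑ p ∈ antidiagonal n, f p.1 p.2 = f 0 n + ∑ j ∈ Ioc 0 n, f j (n - j) := by
  rw [Nat.sum_antidiagonal_eq_sum_range_succ f, Nat.range_succ_eq_Icc_zero,
    ← Ioc_insert_left n.zero_le, sum_insert left_notMem_Ioc, Nat.sub_zero]

theorem eq_zero_of_eq_sum_antidiagonal_mul_self {R : Type*} [CommRing R] (c : ℕ → R)
    (h0 : c 0 = 1) (h : ∀ n, c n = ∑ p ∈ antidiagonal n, c p.1 * c p.2) {n : ℕ} (hn : n ≠ 0) :
    c n = 0 := by
  have hidem : IsIdempotentElem (PowerSeries.mk c) := by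
    ext m
    rw [PowerSeries.coeff_mul, PowerSeries.coeff_mk, h m]
    simp only [PowerSeries.coeff_mk]
  have hunit : IsUnit (PowerSeries.mk c) :=
    PowerSeries.isUnit_iff_constantCoeff.mpr (by simp [h0])
  have hone := congr(PowerSeries.coeff n $((IsIdempotentElem.iff_eq_one_of_isUnit hunit).mp hidem))
  simpa [PowerSeries.coeff_one, hn] using hone

theorem Nat.Partition.sum_map_parts_eq_sum_Ioc {M : Type*} [AddCommMonoid M] {n : ℕ}
    (ν : n.Partition) (f : ℕ → M) :
    (ν.parts.map f).sum = ∑ j ∈ Ioc 0 n, ν.parts.count j • f j := by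
  rw [sum_multiset_map_count]
  refine sum_subset (fun j hj => ?_) fun j _ hj => ?_
  · rw [Multiset.mem_toFinset] at hj
    exact mem_Ioc.mpr ⟨ν.parts_pos hj, ν.le_of_mem_parts hj⟩
  · rw [Multiset.count_eq_zero.mpr (Multiset.mem_toFinset.not.mp hj), zero_smul]

section PartitionExpansion

variable {B : Type*} [CommRing B] [Algebra ℚ B] (q : ℕ → ℕ+ → ℚ) (φ : MvPolynomial ℕ+ ℚ →ₐ[ℚ] B)
  (a : ℕ → B)

noncomputable def partitionWeight (s : Multiset ℕ) : B :=
  ∏ i ∈ s.toFinset, ((s.count i).factorial : ℚ)⁻¹ • a i ^ s.count i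

theorem partitionWeight_eq_prod_of_subset {s : Multiset ℕ} {t : Finset ℕ} (h : s.toFinset ⊆ t) :
    partitionWeight a s = ∏ i ∈ t, ((s.count i).factorial : ℚ)⁻¹ • a i ^ s.count i :=
  prod_subset h fun i _ hi => by
    rw [Multiset.count_eq_zero.mpr (by simpa using hi)]
    simp

theorem count_smul_partitionWeight_cons (j : ℕ) (s : Multiset ℕ) :
    ((j ::ₘ s).count j : ℚ) • partitionWeight a (j ::ₘ s) = a j * partitionWeight a s := by
  have hj : j ∈ insert j s.toFinset := mem_insert_self j _
  have hrest : ∏ i ∈ (insert j s.toFinset).erase j,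
      (((j ::ₘ s).count i).factorial : ℚ)⁻¹ • a i ^ (j ::ₘ s).count i =
      ∏ i ∈ (insert j s.toFinset).erase j, ((s.count i).factorial : ℚ)⁻¹ • a i ^ s.count i :=
    prod_congr rfl fun i hi => by rw [Multiset.count_cons_of_ne (ne_of_mem_erase hi)]
  rw [partitionWeight_eq_prod_of_subset a (Multiset.toFinset_cons j s).subset,
    partitionWeight_eq_prod_of_subset a (subset_insert j _), ← mul_prod_erase _ _ hj,
    ← mul_prod_erase _ _ hj, hrest, Multiset.count_cons_self, ← mul_assoc, ← smul_mul_assoc,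
    smul_smul, Nat.factorial_succ, pow_succ', mul_smul_comm]
  congr 3
  push_cast
  field_simp

theorem sum_count_smul_mul_partitionWeight (F : Multiset ℕ → B) {n j : ℕ} (hj : j ∈ Ioc 0 n) :
    ∑ ν : n.Partition, (ν.parts.count j : ℚ) • (F (ν.parts.erase j) * partitionWeight a ν.parts) =
      a j * ∑ μ : (n - j).Partition, F μ.parts * partitionWeight a μ.parts := by
  let e := Nat.Partition.partitionWithPartEquiv (mem_Ioc.mp hj).1 (mem_Ioc.mp hj).2
  rw [← sum_filter_of_ne (p := fun ν => j ∈ ν.parts) fun ν _ hν => by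
      by_contra hjν
      simp [Multiset.count_eq_zero.mpr hjν] at hν,
    sum_subtype (p := fun ν : n.Partition => j ∈ ν.parts) _ (fun ν => by simp),
    ← e.symm.sum_comp, mul_sum]
  refine sum_congr rfl fun μ _ => ?_
  rw [Nat.Partition.partitionWithPartEquiv_symm_apply_parts, Multiset.erase_cons_head,
    ← mul_smul_comm, count_smul_partitionWeight_cons, mul_left_comm]

/-- The right-hand side of the theorem, with `φ` in the role of `C_0` and `a i` in that of
`C_i(x_1)`. -/
noncomputable def partitionExpansion (n : ℕ) : MvPolynomial ℕ+ ℚ →ₗ[ℚ] B :=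
  ∑ ν : n.Partition,
    LinearMap.mulRight ℚ (partitionWeight a ν.parts) ∘ₗ φ.toLinearMap ∘ₗ deltaQMultiset q ν.parts

theorem partitionExpansion_apply (n : ℕ) (f : MvPolynomial ℕ+ ℚ) :
    partitionExpansion q φ a n f =
      ∑ ν : n.Partition, φ (deltaQMultiset q ν.parts f) * partitionWeight a ν.parts := by
  simp [partitionExpansion]

theorem partitionExpansion_zero (f : MvPolynomial ℕ+ ℚ) : partitionExpansion q φ a 0 f = φ f := by
  simp [partitionExpansion_apply, partitionWeight]

theorem partitionExpansion_one {n : ℕ} (hn : n ≠ 0) : partitionExpansion q φ a n 1 = 0 := by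
  refine (partitionExpansion_apply q φ a n 1).trans (sum_eq_zero fun ν _ => ?_)
  have hν : ν.parts ≠ 0 := fun h => hn (by simpa [h] using ν.parts_sum.symm)
  rw [deltaQMultiset.apply_one q hν, map_zero, zero_mul]

theorem partitionExpansion_X_mul (n : ℕ) (k : ℕ+) (g : MvPolynomial ℕ+ ℚ) :
    partitionExpansion q φ a n (X k * g) = φ (X k) * partitionExpansion q φ a n g +
      ∑ j ∈ Ioc 0 n, q j k • (a j * partitionExpansion q φ a (n - j) g) := by
  have hterm (ν : n.Partition) :
      φ (deltaQMultiset q ν.parts (X k * g)) * partitionWeight a ν.parts =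
        φ (X k) * (φ (deltaQMultiset q ν.parts g) * partitionWeight a ν.parts) +
        ∑ j ∈ Ioc 0 n, q j k • ((ν.parts.count j : ℚ) •
          (φ (deltaQMultiset q (ν.parts.erase j) g) * partitionWeight a ν.parts)) := by
    rw [deltaQMultiset.apply_X_mul, map_add, map_mul, map_multiset_sum, Multiset.map_map,
      Nat.Partition.sum_map_parts_eq_sum_Ioc, add_mul, sum_mul, mul_assoc]
    congr 1
    refine sum_congr rfl fun j _ => ?_
    simp only [Function.comp_apply, map_smul, smul_mul_assoc, smul_comm (q j k),
      Nat.cast_smul_eq_nsmul]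
  simp_rw [partitionExpansion_apply, hterm, sum_add_distrib, ← mul_sum]
  rw [sum_comm]
  congr 1
  refine sum_congr rfl fun j hj => ?_
  rw [← smul_sum, sum_count_smul_mul_partitionWeight a (fun s => φ (deltaQMultiset q s g)) hj]

end PartitionExpansion

theorem eq_partitionExpansion_monomial {B : Type*} [CommRing B] [Algebra ℚ B]
    (q : ℕ → ℕ+ → ℚ) (φ : MvPolynomial ℕ+ ℚ →ₐ[ℚ] B) (Cc : ℕ → MvPolynomial ℕ+ ℚ → B)
    (hC0 : ∀ f, Cc 0 f = φ f)
    (hCmul : ∀ (n : ℕ) (f g : MvPolynomial ℕ+ ℚ),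
      Cc n (f * g) = ∑ p ∈ antidiagonal n, Cc p.1 f * Cc p.2 g)
    (hCconst : ∀ n c, Cc n (C c) = c • Cc n 1)
    (hCX : ∀ n : ℕ, 1 ≤ n → ∀ k : ℕ+, Cc n (X k) = q n k • Cc n (X 1))
    (s : ℕ+ →₀ ℕ) (c : ℚ) (n : ℕ) :
    Cc n (monomial s c) = partitionExpansion q φ (fun i => Cc i (X 1)) n (monomial s c) := by
  refine induction_on_monomial
    (motive := fun p => ∀ n, Cc n p = partitionExpansion q φ (fun i => Cc i (X 1)) n p)
    (fun c n => ?_) (fun p k ih n => ?_) s c n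
  · rw [hCconst, C_eq_smul_one, map_smul]
    congr 1
    rcases eq_or_ne n 0 with rfl | hn
    · rw [hC0, partitionExpansion_zero]
    · rw [partitionExpansion_one q φ _ hn]
      exact eq_zero_of_eq_sum_antidiagonal_mul_self (fun n => Cc n 1) (by simp [hC0])
        (fun n => by simpa using hCmul n 1 1) hn
  · rw [mul_comm, hCmul, sum_antidiagonal_eq_add_sum_Ioc (fun i j => Cc i (X k) * Cc j p),
      partitionExpansion_X_mul, hC0, ih]
    congr 1
    refine sum_congr rfl fun j hj => ?_
    rw [hCX j (mem_Ioc.mp hj).1 k, ih, smul_mul_assoc]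

theorem stmt0 (w : ℕ+ → ℕ) (B : Type) [CommRing B] [Algebra ℚ B]
    (q : ℕ → ℕ+ → ℚ)
    (Cc : ℕ → MvPolynomial ℕ+ ℚ → B)
    (hC0_one : Cc 0 1 = 1)
    (hC0_add : ∀ f g, Cc 0 (f + g) = Cc 0 f + Cc 0 g)
    (hC0_mul : ∀ f g, Cc 0 (f * g) = Cc 0 f * Cc 0 g)
    (hCmul : ∀ (n : ℕ) (f g : MvPolynomial ℕ+ ℚ),
      Cc n (f * g) = ∑ p ∈ Finset.HasAntidiagonal.antidiagonal n, Cc p.1 f * Cc p.2 g)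
    (hCadd : ∀ (n d : ℕ) (f g : MvPolynomial ℕ+ ℚ), f.IsWeightedHomogeneous w d →
      g.IsWeightedHomogeneous w d → Cc n (f + g) = Cc n f + Cc n g)
    (hCX : ∀ n : ℕ, 1 ≤ n → ∀ k : ℕ+, Cc n (X k) = q n k • Cc n (X 1))
    (n d : ℕ) (f : MvPolynomial ℕ+ ℚ) (hf : f.IsWeightedHomogeneous w d) :
    Cc n f = ∑ ν : n.Partition,
      Cc 0 (deltaQPow q ν f) *
        ∏ i ∈ Finset.range (n + 1),
          ((ν.parts.count i).factorial : ℚ)⁻¹ • Cc i (X 1) ^ ν.parts.count i := by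
  let φ : MvPolynomial ℕ+ ℚ →ₐ[ℚ] B :=
    (RingHom.mk' ⟨⟨Cc 0, hC0_one⟩, hC0_mul⟩ hC0_add).toRatAlgHom
  have hCconst (m : ℕ) (c : ℚ) : Cc m (C c) = c • Cc m 1 := by
    rw [C_eq_smul_one]
    exact map_smul_of_isWeightedHomogeneous (hCadd m 0) c (isWeightedHomogeneous_one ℚ w)
  calc Cc n f = ∑ s ∈ f.support, Cc n (monomial s (coeff s f)) :=
        eq_sum_monomial_of_isWeightedHomogeneous (hCadd n d) hf
    _ = partitionExpansion q φ (fun i => Cc i (X 1)) n f := by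
        simp_rw [eq_partitionExpansion_monomial q φ Cc (fun _ => rfl) hCmul hCconst hCX, ← map_sum,
          support_sum_monomial_coeff]
    _ = _ := by
        refine (partitionExpansion_apply q φ _ n f).trans (sum_congr rfl fun ν _ => ?_)
        rw [deltaQPow_eq_deltaQMultiset, partitionWeight_eq_prod_of_subset _ fun i hi =>
          mem_range_succ_iff.mpr (ν.le_of_mem_parts (Multiset.mem_toFinset.mp hi))]
        rfl
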